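/- arXiv:1401.5204 — 7 statements merged into one kernel-verified Lean document; each statement's English description precedes it below -/
import Mathlib

section
/- Every subsemigroup of the additive semigroup of natural numbers is finitely generated. -/
/-- Every subsemigroup (additive submonoid) of ℕ is finitely generated. -/
theorem every_addSubmonoid_of_nat_fg (S : AddSubmonoid ℕ) : S.FG := by
  rw [AddSubmonoid.fg_iff]
  by_cases hS : S = ⊥
  · exact ⟨∅, by simp [hS], Set.finite_empty⟩
  -- minimal positive element
  have hne : {x : ℕ | x ∈ S ∧ x ≠ 0}.Nonempty := by
    by_contra h
    rw [Set.not_nonempty_iff_eq_empty] at h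
    apply hS
    ext x
    simp only [AddSubmonoid.mem_bot]
    constructor
    · intro hx
      by_contra hx0
      exact Set.eq_empty_iff_forall_notMem.mp h x ⟨hx, hx0⟩
    · rintro rfl; exact zero_mem S
  set a := sInf {x : ℕ | x ∈ S ∧ x ≠ 0} with ha
  have haS : a ∈ S ∧ a ≠ 0 := Nat.sInf_mem hne
  have hapos : 0 < a := Nat.pos_of_ne_zero haS.2
  set f : Fin a → ℕ := fun r => sInf {x : ℕ | x ∈ S ∧ x % a = r} with hf
  refine ⟨insert a (Set.range f), ?_, (Set.finite_range f).insert a⟩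
  have hfS : ∀ r : Fin a, f r ∈ S := by
    intro r
    rcases Set.eq_empty_or_nonempty {x : ℕ | x ∈ S ∧ x % a = r} with h | h
    · simp only [hf]; rw [h, Nat.sInf_empty]; exact zero_mem S
    · exact (Nat.sInf_mem h).1
  apply le_antisymm
  · rw [AddSubmonoid.closure_le]
    rintro x (rfl | ⟨r, rfl⟩)
    · exact haS.1
    · exact hfS r
  · intro s hs
    induction s using Nat.strong_induction_on with
    | _ s ih =>
    rcases Nat.eq_zero_or_pos s with rfl | hspos
    · exact zero_mem _
    have hr : s % a < a := Nat.mod_lt _ hapos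
    set r : Fin a := ⟨s % a, hr⟩
    have hmem : s ∈ {x : ℕ | x ∈ S ∧ x % a = r} := ⟨hs, rfl⟩
    have hm : f r ∈ {x : ℕ | x ∈ S ∧ x % a = r} := Nat.sInf_mem ⟨s, hmem⟩
    have hle : f r ≤ s := Nat.sInf_le hmem
    have hdvd : a ∣ s - f r := (Nat.modEq_iff_dvd' hle).mp (by
      show f r % a = s % a
      rw [hm.2])
    rcases hdvd with ⟨k, hk⟩
    have : s = f r + k • a := by
      rw [smul_eq_mul, mul_comm, ← hk, Nat.add_sub_cancel' hle]
    rw [this]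
    exact add_mem
      (AddSubmonoid.subset_closure (Set.mem_insert_iff.mpr (Or.inr ⟨r, rfl⟩)))
      (AddSubmonoid.nsmul_mem (AddSubmonoid.closure _) (AddSubmonoid.subset_closure (Set.mem_insert _ _)) k)
end

section
/- Let Γ₀ ⊆ Γ be an inclusion of submonoids of a finitely generated free abelian group (affine semigroups). Suppose Γ is generated by a family (δⱼ)_{j∈J}, and there exist an integer d ≥ 1 and an element γ ∈ Γ₀ such that γ + d·δⱼ ∈ Γ₀ for every j ∈ J. If Γ₀ is finitely generated, then Γ is finitely generated. -/
/-!
By Dickson's lemma, a finitely generated submonoid `M` of a commutative monoid is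
well-quasi-ordered by `x ≤ y ↔ y ∈ x + M`, and so is any finite union of translates `U + M`;
hence every subset `S ⊆ U + M` lies in `T + M` for some finite `T ⊆ S`. Applied to the elements
`γ + d • δⱼ ∈ Γ₀`, this yields finitely many `δₖ` such that `M = Γ₀ + ⟨δₖ⟩` contains `d • Γ`.
As `ℤⁿ` is torsion-free, dividing the coefficients of `d • x` by `d` with remainder puts `Γ` inside
finitely many translates of `M`, and then `Γ` is generated by `M` and a finite `T ⊆ Γ` with
`Γ ⊆ T + M`.
-/

open Set Pointwise AddSubmonoid

theorem Set.PartiallyWellOrderedOn.exists_finite_basis {α : Type*} {r : α → α → Prop} {S : Set α}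
    (hS : S.PartiallyWellOrderedOn r) : ∃ T ⊆ S, T.Finite ∧ ∀ s ∈ S, ∃ t ∈ T, r t s := by
  classical
  by_contra! h
  have : Nonempty α := ⟨(h ∅ (empty_subset _) finite_empty).choose⟩
  choose! next hnextS hnext using h
  -- A bad sequence: each term is chosen not to dominate any earlier one.
  obtain ⟨A, hA0, hA⟩ : ∃ A : ℕ → Finset α,
      A 0 = ∅ ∧ ∀ n, A (n + 1) = insert (next (A n)) (A n) :=
    ⟨fun n => Nat.rec ∅ (fun _ A => insert (next A) A) n, rfl, fun _ => rfl⟩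
  have hAS : ∀ n, ↑(A n) ⊆ S := by
    intro n
    induction n with
    | zero => simp [hA0]
    | succ n ih => simpa [hA, insert_subset_iff] using ⟨hnextS _ ih (A n).finite_toSet, ih⟩
  have hAmono : Monotone A :=
    monotone_nat_of_le_succ fun n => (hA n).symm ▸ Finset.subset_insert _ _
  obtain ⟨m, n, hmn, hr⟩ := partiallyWellOrderedOn_iff_exists_lt.1 hS (fun n => next (A n))
    fun n => hnextS _ (hAS n) (A n).finite_toSet
  have hmem : next (A m) ∈ A n := hAmono hmn (by simp [hA])
  exact hnext _ (hAS n) (A n).finite_toSet _ hmem hr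

namespace AddSubmonoid

section AddCommMonoid

variable {G : Type*} [AddCommMonoid G]

theorem coe_closure_finset_eq_range_linearCombination (B : Finset G) :
    (closure (B : Set G) : Set G) = range (Fintype.linearCombination ℕ ((↑) : B → G)) := by
  rw [← LinearMap.coe_range, Fintype.range_linearCombination, Subtype.range_coe,
    ← Submodule.span_nat_eq_addSubmonoidClosure, Submodule.coe_toAddSubmonoid]

theorem FG.partiallyWellOrderedOn {M : AddSubmonoid G} (hM : M.FG) :
    (M : Set G).PartiallyWellOrderedOn fun x y => ∃ m ∈ M, x + m = y := by
  obtain ⟨B, rfl⟩ := hM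
  set φ := Fintype.linearCombination ℕ ((↑) : B → G)
  rw [coe_closure_finset_eq_range_linearCombination, ← image_univ]
  refine (partiallyWellOrderedOn_of_wellQuasiOrdered wellQuasiOrdered_le _).image_of_monotone_on
    fun c _ c' _ hle => ⟨φ (c' - c), ?_, ?_⟩
  · rw [← SetLike.mem_coe, coe_closure_finset_eq_range_linearCombination]
    exact mem_range_self _
  · rw [← map_add, add_tsub_cancel_of_le hle]

theorem FG.partiallyWellOrderedOn_add {M : AddSubmonoid G} (hM : M.FG) {U : Set G}
    (hU : U.Finite) : (U + M).PartiallyWellOrderedOn fun x y => ∃ m ∈ M, x + m = y := by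
  lift U to Finset G using hU
  rw [← iUnion_add_left_image, Finset.set_biUnion_coe, Finset.partiallyWellOrderedOn_bUnion]
  refine fun u _ => hM.partiallyWellOrderedOn.image_of_monotone_on ?_
  rintro x - y - ⟨m, hm, rfl⟩
  exact ⟨m, hm, add_assoc u x m⟩

theorem FG.exists_finite_subset_add {M : AddSubmonoid G} (hM : M.FG) {U S : Set G}
    (hU : U.Finite) (hS : S ⊆ U + M) : ∃ T ⊆ S, T.Finite ∧ S ⊆ T + M := by
  obtain ⟨T, hTS, hT, hST⟩ := ((hM.partiallyWellOrderedOn_add hU).mono hS).exists_finite_basis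
  exact ⟨T, hTS, hT, fun s hs => mem_add.2 (hST s hs)⟩

theorem FG.of_subset_add {M Γ : AddSubmonoid G} (hM : M.FG) (hMΓ : M ≤ Γ) {U : Set G}
    (hU : U.Finite) (hΓ : (Γ : Set G) ⊆ U + M) : Γ.FG := by
  obtain ⟨T, hTΓ, hT, hΓT⟩ := hM.exists_finite_subset_add hU hΓ
  have hΓ_eq : Γ = closure T ⊔ M := by
    refine le_antisymm (fun x hx => ?_) (sup_le (closure_le.2 hTΓ) hMΓ)
    obtain ⟨t, ht, m, hm, rfl⟩ := mem_add.1 (hΓT hx)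
    exact add_mem (mem_sup_left (subset_closure ht)) (mem_sup_right hm)
  rw [hΓ_eq]
  exact ((fg_iff _).2 ⟨T, rfl, hT⟩).sup hM

end AddCommMonoid

section AddCommGroup

variable {G : Type*} [AddCommGroup G] [IsAddTorsionFree G]

theorem FG.exists_finite_nsmul_preimage_subset_add {M : AddSubmonoid G} (hM : M.FG) {d : ℕ}
    (hd : d ≠ 0) :
    ∃ U : Set G, U.Finite ∧ (fun x => d • x) ⁻¹' (M : Set G) ⊆ U + (M : Set G) := by
  obtain ⟨B, rfl⟩ := hM
  set φ := Fintype.linearCombination ℕ ((↑) : B → G)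
  refine ⟨(fun x => d • x) ⁻¹' range fun c : B → Fin d => φ fun b => c b,
    (finite_range _).preimage (nsmul_right_injective hd).injOn, fun x hx => ?_⟩
  rw [mem_preimage, coe_closure_finset_eq_range_linearCombination] at hx
  obtain ⟨c, hc⟩ := hx
  -- Division with remainder of the coefficients of `d • x`.
  have hsplit : c = d • (fun b => c b / d) + fun b => c b % d :=
    funext fun b => (Nat.div_add_mod (c b) d).symm
  refine mem_add.2 ⟨x - φ (fun b => c b / d),
    ⟨fun b => ⟨c b % d, Nat.mod_lt _ (Nat.pos_of_ne_zero hd)⟩, ?_⟩,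
    φ (fun b => c b / d), ?_, sub_add_cancel _ _⟩
  · show φ _ = d • (x - _)
    rw [smul_sub, ← hc, ← map_nsmul, eq_sub_iff_add_eq, ← map_add, add_comm, ← hsplit]
  · rw [coe_closure_finset_eq_range_linearCombination]
    exact mem_range_self _

theorem FG.of_nsmul_mem {M Γ : AddSubmonoid G} (hM : M.FG) (hMΓ : M ≤ Γ) {d : ℕ} (hd : d ≠ 0)
    (hΓM : ∀ x ∈ Γ, d • x ∈ M) : Γ.FG := by
  obtain ⟨U, hU, hMU⟩ := hM.exists_finite_nsmul_preimage_subset_add hd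
  exact hM.of_subset_add hMΓ hU fun x hx => hMU (hΓM x hx)

end AddCommGroup

end AddSubmonoid

theorem fg_of_translated_generators_general (n : ℕ) (Γ₀ Γ : AddSubmonoid (Fin n → ℤ))
    (hle : Γ₀ ≤ Γ) {J : Type*} (δ : J → (Fin n → ℤ))
    (hgen : Γ = AddSubmonoid.closure (Set.range δ))
    (d : ℕ) (hd : 1 ≤ d) (γ : Fin n → ℤ)
    (htrans : ∀ j : J, γ + d • δ j ∈ Γ₀)
    (hfg : Γ₀.FG) : Γ.FG := by
  obtain ⟨T, hT, hTfin, hcover⟩ := hfg.exists_finite_subset_add finite_zero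
    (S := range fun j => γ + d • δ j) (by simpa using range_subset_iff.2 htrans)
  obtain ⟨F, -, hF, rfl⟩ := hTfin.exists_subset_finite_image_eq (image_univ.symm ▸ hT)
  set M := Γ₀ ⊔ AddSubmonoid.closure (δ '' F)
  have hMΓ : M ≤ Γ := sup_le hle (hgen ▸ closure_mono (image_subset_range δ F))
  -- Comparing `γ + d • δ j` with a translate `γ + d • δ k` (`k ∈ F`) cancels `γ`.
  have hdδ : ∀ j, d • δ j ∈ M := by
    intro j
    obtain ⟨_, ⟨k, hk, rfl⟩, g, hg, hkg⟩ := mem_add.1 (hcover (mem_range_self j))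
    rw [add_assoc, add_left_cancel_iff] at hkg
    have hδk : δ k ∈ AddSubmonoid.closure (δ '' F) := subset_closure (mem_image_of_mem δ hk)
    exact hkg ▸ add_mem (mem_sup_right (nsmul_mem hδk d)) (mem_sup_left hg)
  have hMfg : M.FG := hfg.sup ((fg_iff _).2 ⟨_, rfl, hF.image δ⟩)
  refine hMfg.of_nsmul_mem hMΓ (Nat.one_le_iff_ne_zero.mp hd) fun x hx => ?_
  rw [hgen] at hx
  induction hx using closure_induction with
  | mem _ hx => obtain ⟨j, rfl⟩ := hx; exact hdδ j
  | zero => simp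
  | add x y _ _ hx hy => simpa [smul_add] using add_mem hx hy

/-- Proposition (transl): Let `Γ₀ ⊆ Γ` be submonoids of a finitely generated free abelian
group `ℤ^n`.  If `Γ` is generated by a family `(δⱼ)_{j ∈ J}` and there exist `d ≥ 1` and
`γ ∈ Γ₀` with `γ + d • δⱼ ∈ Γ₀` for all `j`, then finite generation of `Γ₀` implies that
of `Γ`. -/
theorem fg_of_translated_generators (n : ℕ) (Γ₀ Γ : AddSubmonoid (Fin n → ℤ))
    (hle : Γ₀ ≤ Γ) {J : Type*} (δ : J → (Fin n → ℤ))
    (hgen : Γ = AddSubmonoid.closure (Set.range δ))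
    (d : ℕ) (hd : 1 ≤ d) (γ : Fin n → ℤ) (hγ : γ ∈ Γ₀)
    (htrans : ∀ j : J, γ + d • δ j ∈ Γ₀)
    (hfg : Γ₀.FG) : Γ.FG :=
  fg_of_translated_generators_general n Γ₀ Γ hle δ hgen d hd γ htrans hfg
end

section
/- Let Γ be a submonoid of ℤ^n containing a finitely generated submonoid Γ₁ such that the convex cone in ℝ^n generated by Γ₁ equals the convex cone generated by Γ and the subgroup of ℤ^n generated by Γ₁ equals the subgroup generated by Γ. Then Γ is finitely generated. -/
/-!
Write `Γ₁` as generated by `v₁, …, v_s`. An integer point `γ` of the cone of `Γ₁` is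
`∑ dᵢ vᵢ` with real `dᵢ ≥ 0`; subtracting `∑ ⌊dᵢ⌋ vᵢ ∈ Γ₁` leaves a remainder in the box
`|x| ≤ ∑ |vᵢ|`, so `Γ ⊆ Γ₁ + K` for a finite set `K`. For each `r ∈ K`, Dickson's lemma on
`ℕ^s` covers `{g ∈ Γ₁ | g + r ∈ Γ}` by finitely many translates `f + Γ₁`, and the points
`f + r` together with the `vᵢ` generate `Γ`.
-/

/-- The convex cone in `ℝ^n` generated by a set of integer vectors: all finite
nonnegative real linear combinations of elements of the set. -/
def coneGen (n : ℕ) (S : Set (Fin n → ℤ)) : Set (Fin n → ℝ) :=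
  {x | ∃ (m : ℕ) (c : Fin m → ℝ) (v : Fin m → (Fin n → ℤ)),
    (∀ i, 0 ≤ c i) ∧ (∀ i, v i ∈ S) ∧ x = ∑ i, c i • (fun k => ((v i k : ℤ) : ℝ))}

open Set Pointwise

theorem exists_finite_subset_forall_exists_le {α : Type*} [PartialOrder α] [WellQuasiOrderedLE α]
    (S : Set α) : ∃ F ⊆ S, F.Finite ∧ ∀ x ∈ S, ∃ f ∈ F, f ≤ x := by
  refine ⟨{x | Minimal (· ∈ S) x}, fun x hx => hx.prop, ?_, fun x hx => ?_⟩
  · exact (setOfPred_minimal_antichain _).finite_of_partiallyWellOrderedOn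
      (isPWO_of_wellQuasiOrderedLE _)
  · obtain ⟨f, hfx, hf⟩ := (isPWO_of_wellQuasiOrderedLE S).exists_le_minimal hx
    exact ⟨f, hf, hfx⟩

namespace AddSubmonoid

variable {M : Type*} [AddCommMonoid M] {Γ₁ Γ : AddSubmonoid M}

theorem FG.exists_finite_subset_subset_add (hfg : Γ₁.FG) {I : Set M} (hI : I ⊆ Γ₁) :
    ∃ F ⊆ I, F.Finite ∧ I ⊆ F + Γ₁ := by
  classical
  obtain ⟨S, rfl⟩ := hfg
  let φ : (S → ℕ) →+ M :=
    { toFun := fun a => ∑ i, a i • (i : M)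
      map_zero' := by simp
      map_add' := fun a b => by simp [add_smul, Finset.sum_add_distrib] }
  obtain ⟨F, hFI, hF, hmin⟩ := exists_finite_subset_forall_exists_le (φ ⁻¹' I)
  refine ⟨φ '' F, image_subset_iff.2 hFI, hF.image φ, fun x hx => ?_⟩
  obtain ⟨a, rfl⟩ := mem_closure_finset'.1 (hI hx)
  obtain ⟨f, hfF, hfa⟩ := hmin a hx
  refine ⟨φ f, mem_image_of_mem φ hfF, φ (a - f), ?_, ?_⟩
  · exact sum_mem _ fun i _ => nsmul_mem (subset_closure i.2) _
  · change φ f + φ (a - f) = φ a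
    rw [← map_add, add_tsub_cancel_of_le hfa]

theorem fg_of_le_of_subset_add_finite (hle : Γ₁ ≤ Γ) (hfg : Γ₁.FG) {K : Set M} (hK : K.Finite)
    (hsub : (Γ : Set M) ⊆ Γ₁ + K) : Γ.FG := by
  have hfiber : ∀ r ∈ K, ∃ F ⊆ {g | g ∈ Γ₁ ∧ g + r ∈ Γ}, F.Finite ∧
      {g | g ∈ Γ₁ ∧ g + r ∈ Γ} ⊆ F + Γ₁ :=
    fun r _ => hfg.exists_finite_subset_subset_add fun g hg => hg.1
  choose! F hFsub hF hcover using hfiber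
  set G := ⋃ r ∈ K, F r + {r}
  have hGΓ : G ⊆ Γ := by
    simp only [G, iUnion_subset_iff, add_singleton, image_subset_iff]
    exact fun r hr g hg => (hFsub r hr hg).2
  have hΓ : Γ = Γ₁ ⊔ closure G := by
    refine le_antisymm (fun γ hγ => ?_) (sup_le hle (closure_le.2 hGΓ))
    obtain ⟨g, hg, r, hr, rfl⟩ := mem_add.1 (hsub hγ)
    obtain ⟨f, hf, h, hh, rfl⟩ := mem_add.1 (hcover r hr ⟨hg, hγ⟩)
    rw [show f + h + r = h + (f + r) by abel]
    refine add_mem (mem_sup_left hh) (mem_sup_right (subset_closure ?_))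
    exact mem_biUnion hr (add_mem_add hf rfl)
  rw [hΓ]
  have hG : G.Finite := hK.biUnion fun r hr => (hF r hr).add (finite_singleton r)
  exact hfg.sup ⟨hG.toFinset, by simp⟩

end AddSubmonoid

theorem abs_sum_mul_le_sum_abs {α ι : Type*} [Ring α] [LinearOrder α] [IsOrderedRing α]
    [Fintype ι] {t : ι → α} (ht : ∀ i, t i ∈ Icc 0 1) (w : ι → α) :
    |∑ i, t i * w i| ≤ ∑ i, |w i| := by
  refine (Finset.abs_sum_le_sum_abs _ _).trans (Finset.sum_le_sum fun i _ => ?_)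
  rw [abs_mul, abs_of_nonneg (ht i).1]
  exact mul_le_of_le_one_left (abs_nonneg _) (ht i).2

theorem mem_coneGen_of_mem {n : ℕ} {S : Set (Fin n → ℤ)} {v : Fin n → ℤ} (hv : v ∈ S) :
    (fun k => (v k : ℝ)) ∈ coneGen n S :=
  ⟨1, fun _ => 1, fun _ => v, fun _ => zero_le_one, fun _ => hv, by simp⟩

theorem exists_nonneg_coeffs_of_mem_coneGen_closure {n : ℕ} {S : Finset (Fin n → ℤ)}
    {x : Fin n → ℝ} (hx : x ∈ coneGen n (AddSubmonoid.closure (S : Set (Fin n → ℤ)))) :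
    ∃ d : S → ℝ, (∀ i, 0 ≤ d i) ∧ ∀ k, x k = ∑ i, d i * (i.1 k : ℝ) := by
  obtain ⟨m, c, w, hc, hw, rfl⟩ := hx
  choose a ha using fun j => AddSubmonoid.mem_closure_finset'.1 (hw j)
  refine ⟨fun i => ∑ j, c j * a j i, fun i => Finset.sum_nonneg fun j _ =>
    mul_nonneg (hc j) (Nat.cast_nonneg _), fun k => ?_⟩
  simp only [ha, Finset.sum_apply, Pi.smul_apply, smul_eq_mul, Int.cast_sum, Finset.sum_mul,
    Finset.mul_sum]
  rw [Finset.sum_comm]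
  simp [mul_assoc]

theorem exists_finite_forall_mem_coneGen_mem_add {n : ℕ} {Γ₁ : AddSubmonoid (Fin n → ℤ)}
    (hfg : Γ₁.FG) : ∃ K : Set (Fin n → ℤ), K.Finite ∧
      ∀ γ : Fin n → ℤ, (fun k => (γ k : ℝ)) ∈ coneGen n Γ₁ → γ ∈ (Γ₁ : Set (Fin n → ℤ)) + K := by
  obtain ⟨S, rfl⟩ := hfg
  set B := ∑ i : S, |i.1|
  refine ⟨Icc (-B) B, finite_Icc _ _, fun γ hγ => ?_⟩
  obtain ⟨d, hd0, hd⟩ := exists_nonneg_coeffs_of_mem_coneGen_closure hγ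
  set g := ∑ i : S, ⌊d i⌋₊ • i.1
  have hg : g ∈ AddSubmonoid.closure (S : Set (Fin n → ℤ)) :=
    AddSubmonoid.sum_mem _ fun i _ =>
      AddSubmonoid.nsmul_mem _ (AddSubmonoid.subset_closure i.2) _
  have hbound : ∀ k, |(γ - g) k| ≤ B k := by
    intro k
    have hfract : ∀ i, d i - ⌊d i⌋₊ ∈ Icc (0 : ℝ) 1 := fun i =>
      ⟨sub_nonneg.2 (Nat.floor_le (hd0 i)), (sub_lt_iff_lt_add'.2 (Nat.lt_floor_add_one _)).le⟩
    have hrem : ((γ - g) k : ℝ) = ∑ i, (d i - ⌊d i⌋₊) * (i.1 k : ℝ) := by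
      simp [g, hd k, sub_mul, Finset.sum_apply]
    have hB : ((B k : ℤ) : ℝ) = ∑ i : S, |(i.1 k : ℝ)| := by simp [B, Finset.sum_apply]
    have hle := abs_sum_mul_le_sum_abs hfract fun i => (i.1 k : ℝ)
    rw [← hrem, ← hB] at hle
    exact_mod_cast hle
  have hbox : γ - g ∈ Icc (-B) B :=
    ⟨fun k => (abs_le.1 (hbound k)).1, fun k => (abs_le.1 (hbound k)).2⟩
  exact mem_add.2 ⟨g, hg, γ - g, hbox, add_sub_cancel _ _⟩

theorem fg_of_fg_subsemigroup_same_cone_general (n : ℕ) (Γ₁ Γ : AddSubmonoid (Fin n → ℤ))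
    (hle : Γ₁ ≤ Γ) (hfg : Γ₁.FG)
    (hcone : coneGen n (Γ₁ : Set (Fin n → ℤ)) = coneGen n (Γ : Set (Fin n → ℤ))) :
    Γ.FG := by
  obtain ⟨K, hK, hmem⟩ := exists_finite_forall_mem_coneGen_mem_add hfg
  exact AddSubmonoid.fg_of_le_of_subset_add_finite hle hfg hK fun γ hγ =>
    hmem γ (hcone ▸ mem_coneGen_of_mem hγ)

/-- Corollary (fincone): a submonoid `Γ` of `ℤ^n` containing a finitely generated
submonoid `Γ₁` generating the same convex cone and the same subgroup is finitely
generated. -/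
theorem fg_of_fg_subsemigroup_same_cone (n : ℕ) (Γ₁ Γ : AddSubmonoid (Fin n → ℤ))
    (hle : Γ₁ ≤ Γ) (hfg : Γ₁.FG)
    (hcone : coneGen n (Γ₁ : Set (Fin n → ℤ)) = coneGen n (Γ : Set (Fin n → ℤ)))
    (hgrp : AddSubgroup.closure (Γ₁ : Set (Fin n → ℤ))
      = AddSubgroup.closure (Γ : Set (Fin n → ℤ))) :
    Γ.FG :=
  fg_of_fg_subsemigroup_same_cone_general n Γ₁ Γ hle hfg hcone
end

section
/- Let b : ℤ^N → ℤ^r be a surjective group homomorphism with kernel L, given by an N × (N−r) matrix M of generators of L as above. For a subset I = {i₁ < ⋯ < i_r} ⊆ {1,…,N}, the absolute value of the determinant of the r × r matrix whose columns are b(e_{i₁}), …, b(e_{i_r}) equals the absolute value of the (N−r) × (N−r) minor of M obtained by deleting the rows indexed by I. In particular, when this determinant is nonzero, the index in ℤ^r of the subgroup generated by b(e_{i₁}),…,b(e_{i_r}) equals the absolute value of the complementary minor of M. -/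
/-!
Choose a linear section `T` of `b` (possible since `ℤ^r` is free). As the columns of `M` span
`ker b`, the square matrix `Ψ = (T | M)` is surjective, hence unimodular. Order the rows of `Ψ`
as `(S, Sᶜ)` and multiply on the left by the block matrix with rows `(b e_i)_{i ∈ S ⊔ Sᶜ}` and
`(0 | 1)`: since `b T = 1` and `b M = 0`, the result is block lower triangular with diagonal
blocks `1` and the complementary minor of `M`, while the left factor is block upper triangular
with diagonal blocks `det (b e_i)_{i ∈ S}` and `1`. Hence the two minors agree up to the unit
`det Ψ`. The index statement is the Smith normal form computation `[ℤ^r : D ℤ^r] = |det D|`.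
-/

namespace Matrix

variable {R : Type*} [CommRing R] {ι σ κ : Type*} [Fintype ι] [Fintype σ] [Fintype κ]

theorem fromCols_mulVec_surjective {B : Matrix σ ι R} {T : Matrix ι σ R} {M : Matrix ι κ R}
    [DecidableEq σ] (hT : B * T = 1)
    (hM : LinearMap.ker B.mulVecLin ≤ LinearMap.range M.mulVecLin) :
    Function.Surjective (fromCols T M).mulVec := by
  intro x
  obtain ⟨u, hu⟩ := hM (x := x - T *ᵥ (B *ᵥ x)) <| by
    rw [LinearMap.mem_ker, mulVecLin_apply, mulVec_sub, mulVec_mulVec, hT, one_mulVec, sub_self]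
  rw [mulVecLin_apply] at hu
  exact ⟨Sum.elim (B *ᵥ x) u, by rw [fromCols_mulVec_sumElim, hu, add_sub_cancel]⟩

variable [DecidableEq σ] [DecidableEq κ]

theorem det_submatrix_mul_det_fromCols_submatrix (B : Matrix σ ι R) (T : Matrix ι σ R)
    (M : Matrix ι κ R) (hT : B * T = 1) (hM : B * M = 0) (e : σ ⊕ κ ≃ ι) :
    (B.submatrix id (e ∘ Sum.inl)).det * ((fromCols T M).submatrix e id).det
      = (M.submatrix (e ∘ Sum.inr) id).det := by
  have hB : B.submatrix id e
      = fromCols (B.submatrix id (e ∘ Sum.inl)) (B.submatrix id (e ∘ Sum.inr)) := by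
    ext i (j | j) <;> rfl
  have hX : (fromCols T M).submatrix e id = fromRows ((fromCols T M).submatrix (e ∘ Sum.inl) id)
      (fromCols (T.submatrix (e ∘ Sum.inr) id) (M.submatrix (e ∘ Sum.inr) id)) := by
    ext (i | i) (j | j) <;> rfl
  have hprod : fromBlocks (B.submatrix id (e ∘ Sum.inl)) (B.submatrix id (e ∘ Sum.inr)) 0 1
      * (fromCols T M).submatrix e id
      = fromBlocks 1 0 (T.submatrix (e ∘ Sum.inr) id) (M.submatrix (e ∘ Sum.inr) id) := by
    rw [← fromRows_fromCols_eq_fromBlocks, ← hB, fromRows_mul, submatrix_mul_equiv, mul_fromCols,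
      hT, hM, hX, fromCols_mul_fromRows, Matrix.zero_mul, Matrix.one_mul, zero_add,
      submatrix_id_id, fromRows_fromCols_eq_fromBlocks]
  simpa [det_fromBlocks_zero₂₁, det_fromBlocks_zero₁₂] using congrArg det hprod

end Matrix

theorem Matrix.isUnit_det_submatrix_of_mulVec_surjective {R : Type*} [CommRing R]
    {ι n : Type*} [Fintype n] [DecidableEq n] {A : Matrix ι n R}
    (hA : Function.Surjective A.mulVec) (e : n ≃ ι) : IsUnit (A.submatrix e id).det := by
  rw [← isUnit_iff_isUnit_det, ← mulVec_surjective_iff_isUnit]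
  intro z
  obtain ⟨v, hv⟩ := hA (z ∘ e.symm)
  exact ⟨v, funext fun i => (congrFun hv (e i)).trans (congrArg z (e.symm_apply_apply i))⟩

theorem associated_det_toMatrix'_submatrix_det_submatrix {R : Type*} [CommRing R]
    {ι σ κ : Type*} [Fintype ι] [Fintype σ] [Fintype κ] [DecidableEq ι] [DecidableEq σ]
    [DecidableEq κ] (b : (ι → R) →ₗ[R] (σ → R)) (hb : Function.Surjective b)
    (M : Matrix ι κ R) (hM : LinearMap.range M.mulVecLin = LinearMap.ker b) (e : σ ⊕ κ ≃ ι) :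
    Associated ((LinearMap.toMatrix' b).submatrix id (e ∘ Sum.inl)).det
      (M.submatrix (e ∘ Sum.inr) id).det := by
  obtain ⟨g, hg⟩ := Module.projective_lifting_property b LinearMap.id hb
  have hT : LinearMap.toMatrix' b * LinearMap.toMatrix' g = 1 := by
    rw [← LinearMap.toMatrix'_comp, hg, LinearMap.toMatrix'_id]
  have hbM : LinearMap.toMatrix' b * M = 0 := by
    rw [← LinearMap.toMatrix'_toLin' M, ← LinearMap.toMatrix'_comp, Matrix.toLin'_apply',
      LinearMap.range_le_ker_iff.mp hM.le, map_zero]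
  have hsurj := Matrix.fromCols_mulVec_surjective hT
    (by rw [hM, ← Matrix.toLin'_apply', Matrix.toLin'_toMatrix'])
  exact ⟨(Matrix.isUnit_det_submatrix_of_mulVec_surjective hsurj e).unit,
    Matrix.det_submatrix_mul_det_fromCols_submatrix _ _ _ hT hbM e⟩

theorem LinearMap.index_range_eq_natAbs_det {E : Type*} [AddCommGroup E] [Module.Free ℤ E]
    [Module.Finite ℤ E] (f : E →ₗ[ℤ] E) (hf : Function.Injective f) :
    (LinearMap.range f).toAddSubgroup.index = (LinearMap.det f).natAbs := by
  rw [AddSubgroup.index]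
  exact (Submodule.natAbs_det_equiv (LinearMap.range f) (LinearEquiv.ofInjective f hf)).symm

theorem Matrix.index_closure_col_eq_natAbs_det {n : Type*} [Fintype n] [DecidableEq n]
    (A : Matrix n n ℤ) (hA : A.det ≠ 0) :
    (AddSubgroup.closure (Set.range A.col)).index = A.det.natAbs := by
  rw [← Submodule.span_int_eq_addSubgroupClosure, ← Matrix.range_mulVecLin,
    LinearMap.index_range_eq_natAbs_det _ (mulVec_injective_of_det_ne_zero hA),
    ← Matrix.toLin'_apply', LinearMap.det_toLin']

theorem minor_duality_general (N r : ℕ)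
    (b : (Fin N → ℤ) →ₗ[ℤ] (Fin r → ℤ)) (hb : Function.Surjective b)
    (M : Matrix (Fin N) (Fin (N - r)) ℤ)
    (hspan : Submodule.span ℤ (Set.range (fun j : Fin (N - r) => (fun i => M i j : Fin N → ℤ)))
      = LinearMap.ker b)
    (S : Finset (Fin N)) (hS : S.card = r) (hc : Sᶜ.card = N - r) :
    (Matrix.det (fun i j : Fin r => b (Pi.single ((S.orderIsoOfFin hS j : Fin N)) 1) i)).natAbs
      = (Matrix.det (M.submatrix (fun i : Fin (N - r) => ((Sᶜ.orderIsoOfFin hc i : Fin N))) id)).natAbs ∧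
    ((Matrix.det (fun i j : Fin r => b (Pi.single ((S.orderIsoOfFin hS j : Fin N)) 1) i)) ≠ 0 →
      (AddSubgroup.closure
        (Set.range (fun j : Fin r => b (Pi.single ((S.orderIsoOfFin hS j : Fin N)) 1)))).index
        = (Matrix.det (M.submatrix (fun i : Fin (N - r) => ((Sᶜ.orderIsoOfFin hc i : Fin N))) id)).natAbs) := by
  have hM : LinearMap.range M.mulVecLin = LinearMap.ker b := by
    rw [Matrix.range_mulVecLin]
    exact hspan
  have hminors : _ = _ := Int.natAbs_eq_iff_associated.mpr
    (associated_det_toMatrix'_submatrix_det_submatrix b hb M hM (finSumEquivOfFinset hS hc))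
  refine ⟨hminors, fun hdet => ?_⟩
  exact (Matrix.index_closure_col_eq_natAbs_det _ hdet).trans hminors

/-- Duality of minors: for a surjection `b : ℤ^N → ℤ^r` with kernel spanned by the
columns of `M`, and a choice `S` of `r` of the standard basis vectors, the absolute
value of `det (b e_{i₁}, …, b e_{i_r})` equals the absolute value of the complementary
`(N−r) × (N−r)` minor of `M`; when the determinant is nonzero, the index of the
subgroup generated by the `b e_i`, `i ∈ S`, equals this absolute value. -/
theorem minor_duality (N r : ℕ) (hr : r ≤ N)
    (b : (Fin N → ℤ) →ₗ[ℤ] (Fin r → ℤ)) (hb : Function.Surjective b)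
    (M : Matrix (Fin N) (Fin (N - r)) ℤ)
    (hindep : LinearIndependent ℤ (fun j : Fin (N - r) => (fun i => M i j : Fin N → ℤ)))
    (hspan : Submodule.span ℤ (Set.range (fun j : Fin (N - r) => (fun i => M i j : Fin N → ℤ)))
      = LinearMap.ker b)
    (S : Finset (Fin N)) (hS : S.card = r) (hc : Sᶜ.card = N - r) :
    (Matrix.det (fun i j : Fin r => b (Pi.single ((S.orderIsoOfFin hS j : Fin N)) 1) i)).natAbs
      = (Matrix.det (M.submatrix (fun i : Fin (N - r) => ((Sᶜ.orderIsoOfFin hc i : Fin N))) id)).natAbs ∧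
    ((Matrix.det (fun i j : Fin r => b (Pi.single ((S.orderIsoOfFin hS j : Fin N)) 1) i)) ≠ 0 →
      (AddSubgroup.closure
        (Set.range (fun j : Fin r => b (Pi.single ((S.orderIsoOfFin hS j : Fin N)) 1)))).index
        = (Matrix.det (M.submatrix (fun i : Fin (N - r) => ((Sᶜ.orderIsoOfFin hc i : Fin N))) id)).natAbs) :=
  minor_duality_general N r b hb M hspan S hS hc
end

section
/- Let Φ be a totally ordered abelian group of finite rank h, with sequence of convex subgroups (0) = Ψ_h ⊂ Ψ_{h−1} ⊂ ⋯ ⊂ Ψ₁ ⊂ Ψ₀ = Φ. Then the divisible hull Φ ⊗_ℤ ℚ, with the induced ordering, is order-isomorphic to a lexicographic product Ξ₁ × ⋯ × Ξ_h of totally ordered divisible abelian groups of rank one, such that for each j the image of Ψⱼ ⊗_ℤ ℚ corresponds to {0} × ⋯ × {0} × Ξ_{j+1} × ⋯ × Ξ_h. -/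
/-!
Maximality of the chain makes each `Ψ j / Ψ (j + 1)` archimedean: a convex subgroup strictly
between `0` and the whole quotient would pull back to a convex subgroup of `Φ` strictly between
`Ψ (j + 1)` and `Ψ j`. Hölder's theorem embeds this quotient into `ℝ`, and since `ℚ`-vector
spaces are injective `ℤ`-modules the embedding extends to a coordinate `K j : Φ →+ ℝ` with values
in the `ℚ`-span `Ξ j` of `K j (Ψ j)`. The map `x ↦ (K j x)_j` is then a lexicographic order
embedding; its base change to `ℚ ⊗ Φ` stays injective because `ℚ ⊗ Φ` is the localization of `Φ`
at the nonzero integers, and its image is `∏ Ξ j` because the matrix of the `K j` with respect to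
the chain is triangular.
-/

open scoped TensorProduct

def IsConvexAddSubgroup {Φ : Type*} [AddCommGroup Φ] [LinearOrder Φ] [IsOrderedAddMonoid Φ]
    (Ψ : AddSubgroup Φ) : Prop :=
  ∀ x y : Φ, 0 ≤ x → x ≤ y → y ∈ Ψ → x ∈ Ψ

section ConvexSubgroup

variable {G H : Type*} [AddCommGroup G] [LinearOrder G] [IsOrderedAddMonoid G]
  [AddCommGroup H] [LinearOrder H] [IsOrderedAddMonoid H]

theorem IsConvexAddSubgroup.comap {C : AddSubgroup G} (hC : IsConvexAddSubgroup C)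
    {f : H →+ G} (hf : Monotone f) : IsConvexAddSubgroup (C.comap f) := fun x y hx hxy hy =>
  hC (f x) (f y) (map_zero f ▸ hf hx) (hf hxy) hy

theorem IsConvexAddSubgroup.map_subtype {B : AddSubgroup G} (hB : IsConvexAddSubgroup B)
    {C : AddSubgroup B} (hC : IsConvexAddSubgroup C) : IsConvexAddSubgroup (C.map B.subtype) := by
  rintro x _ hx hxy ⟨y, hy, rfl⟩
  have hxB : x ∈ B := hB x y hx hxy y.2
  exact ⟨⟨x, hxB⟩, hC _ y hx hxy hy, rfl⟩

theorem ArchimedeanClass.isConvexAddSubgroup_closedBallAddSubgroup (c : ArchimedeanClass G) :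
    IsConvexAddSubgroup c.closedBallAddSubgroup := by
  intro x y hx hxy hy
  rw [mem_closedBallAddSubgroup_iff] at hy ⊢
  exact hy.trans (mk_le_mk_of_abs (by rwa [abs_of_nonneg hx, abs_of_nonneg (hx.trans hxy)]))

theorem archimedean_of_isConvexAddSubgroup_eq_bot_or_eq_top
    (h : ∀ C : AddSubgroup G, IsConvexAddSubgroup C → C = ⊥ ∨ C = ⊤) : Archimedean G := by
  have hle : ∀ a : G, a ≠ 0 → ∀ b, ArchimedeanClass.mk a ≤ ArchimedeanClass.mk b := by
    intro a ha b
    rcases h _ (ArchimedeanClass.isConvexAddSubgroup_closedBallAddSubgroup (.mk a)) with hbot | htop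
    · have : a ∈ (ArchimedeanClass.mk a).closedBallAddSubgroup :=
        ArchimedeanClass.mem_closedBallAddSubgroup_iff.mpr le_rfl
      exact absurd (by simpa [hbot] using this) ha
    · exact ArchimedeanClass.mem_closedBallAddSubgroup_iff.mp (htop ▸ AddSubgroup.mem_top b)
  exact ArchimedeanClass.archimedean_of_mk_eq_mk fun a ha b hb =>
    le_antisymm (hle a ha b) (hle b hb a)

variable {N : AddSubgroup G}

def IsConvexAddSubgroup.quotientCone (hN : IsConvexAddSubgroup N) : AddGroupCone (G ⧸ N) where
  toAddSubmonoid := (AddSubmonoid.nonneg G).map (QuotientAddGroup.mk' N)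
  eq_zero_of_mem_of_neg_mem' := by
    rintro _ ⟨x, hx, rfl⟩ ⟨y, hy, hxy⟩
    have hsum : x + y ∈ N := by
      rw [← QuotientAddGroup.eq_zero_iff, QuotientAddGroup.mk_add]
      simp only [QuotientAddGroup.mk'_apply] at hxy
      rw [hxy, add_neg_cancel]
    exact (QuotientAddGroup.eq_zero_iff x).mpr (hN x _ hx (le_add_of_nonneg_right hy) hsum)

instance (hN : IsConvexAddSubgroup N) : HasMemOrNegMem hN.quotientCone where
  mem_or_neg_mem := by
    rintro ⟨x⟩
    rcases le_total 0 x with hx | hx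
    · exact .inl ⟨x, hx, rfl⟩
    · exact .inr ⟨-x, neg_nonneg.mpr hx, rfl⟩

theorem IsConvexAddSubgroup.exists_monotone_ker_eq (hN : IsConvexAddSubgroup N)
    (hmax : ∀ C : AddSubgroup G, IsConvexAddSubgroup C → N ≤ C → C = N ∨ C = ⊤) :
    ∃ f : G →+ ℝ, Monotone f ∧ f.ker = N := by
  classical
  let _ := LinearOrder.mkOfAddGroupCone hN.quotientCone
  have := IsOrderedAddMonoid.mkOfCone hN.quotientCone
  set π := QuotientAddGroup.mk' N
  have hπ_surj : Function.Surjective π := QuotientAddGroup.mk'_surjective N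
  have hπ_mono : Monotone π := fun x y hxy => ⟨y - x, sub_nonneg.mpr hxy, by simp [π]⟩
  have : Archimedean (G ⧸ N) := by
    refine archimedean_of_isConvexAddSubgroup_eq_bot_or_eq_top fun C hC => ?_
    have hNC : N ≤ C.comap π := fun x hx => by simp [π, (QuotientAddGroup.eq_zero_iff x).mpr hx]
    rcases hmax _ (hC.comap hπ_mono) hNC with h | h
    · left
      rw [← AddSubgroup.map_comap_eq_self_of_surjective hπ_surj C, h, QuotientAddGroup.map_mk'_self]
    · right
      rw [← AddSubgroup.map_comap_eq_self_of_surjective hπ_surj C, h,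
        AddSubgroup.map_top_of_surjective _ hπ_surj]
  obtain ⟨f, hf⟩ := Archimedean.exists_orderAddMonoidHom_real_injective (G ⧸ N)
  refine ⟨(f : G ⧸ N →+ ℝ).comp π, f.monotone'.comp hπ_mono, ?_⟩
  ext x
  simp [π, map_eq_zero_iff f hf]

end ConvexSubgroup

theorem AddSubgroup.exists_extend_mem_span {A W : Type*} [AddCommGroup A] [AddCommGroup W]
    [Module ℚ W] {B : AddSubgroup A} (f : B →+ W) :
    ∃ g : A →+ W, (∀ b : B, g b = f b) ∧ ∀ a, g a ∈ Submodule.span ℚ (Set.range f) := by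
  set S := Submodule.span ℚ (Set.range f)
  have : DivisibleBy S ℤ :=
    { div := fun a n => (n : ℚ)⁻¹ • a
      div_zero := by simp
      div_cancel := fun a hn => by
        rw [← Int.cast_smul_eq_zsmul ℚ, smul_smul, mul_inv_cancel₀ (by exact_mod_cast hn),
          one_smul] }
  obtain ⟨g, hg⟩ := (Module.Baer.of_divisible S).extension_property_addMonoidHom B.subtype
    B.subtype_injective (f.codRestrict S.toAddSubgroup fun b => Submodule.subset_span ⟨b, rfl⟩)
  refine ⟨S.subtype.toAddMonoidHom.comp g, fun b => ?_, fun a => (g a).2⟩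
  simpa using congrArg Subtype.val (DFunLike.congr_fun hg b)

theorem AddMonoidHom.liftBaseChange_rat_injective {A W : Type*} [AddCommGroup A] [AddCommGroup W]
    [Module ℚ W] {T : A →+ W} (hT : Function.Injective T) :
    Function.Injective (T.toIntLinearMap.liftBaseChange ℚ) := by
  have : IsLocalizedModule (nonZeroDivisors ℤ) (TensorProduct.mk ℤ ℚ A 1) :=
    (isLocalizedModule_iff_isBaseChange _ ℚ _).mpr (TensorProduct.isBaseChange ℤ A ℚ)
  refine IsLocalizedModule.injective_of_map_zero (nonZeroDivisors ℤ) (TensorProduct.mk ℤ ℚ A 1)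
    (g := (T.toIntLinearMap.liftBaseChange ℚ).restrictScalars ℤ) fun m hm => ?_
  have hm' : T m = 0 := by simpa using (show T.toIntLinearMap.liftBaseChange ℚ (1 ⊗ₜ m) = 0 from hm)
  simp [(map_eq_zero_iff T hT).mp hm']

theorem Submodule.pi_le_span_of_triangular {R M : Type*} [Ring R] [AddCommGroup M] [Module R M]
    {h : ℕ} {Ξ : Fin h → Submodule R M} {s : Set (Fin h → M)} (hs : s ⊆ pi Set.univ Ξ)
    (htri : ∀ j, Ξ j ≤ span R ((· j) '' {v ∈ s | ∀ i < j, v i = 0})) :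
    pi Set.univ Ξ ≤ span R s := by
  suffices ∀ j : Fin (h + 1), ∀ a ∈ pi Set.univ Ξ, (∀ i : Fin h, i.castSucc < j → a i = 0) →
      a ∈ span R s from
    fun a ha => this 0 a ha fun i hi => absurd hi (Fin.not_lt_zero _)
  intro j
  induction j using Fin.reverseInduction with
  | last =>
    intro a _ ha
    rw [show a = 0 from funext fun i => ha i (Fin.castSucc_lt_last i)]
    exact zero_mem _
  | cast j ih =>
    intro a ha ha0
    have haj : a j ∈ map (LinearMap.proj j) (span R {v ∈ s | ∀ i < j, v i = 0}) := by
      rw [← span_image]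
      exact htri j (ha j trivial)
    obtain ⟨w, hw, hwj⟩ := haj
    obtain ⟨hws, hw0⟩ : w ∈ span R s ⊓ pi {i | i < j} (fun _ => ⊥) := by
      refine span_le.mpr ?_ hw
      rintro v ⟨hvs, hv0⟩
      exact mem_inf.mpr ⟨subset_span hvs, fun i hi => (mem_bot R).mpr (hv0 i hi)⟩
    have hrest : a - w ∈ span R s := by
      refine ih _ (sub_mem ha (span_le.mpr hs hws)) fun i hi => ?_
      rcases (Fin.castSucc_lt_succ_iff.mp hi).lt_or_eq with hij | rfl
      · rw [Pi.sub_apply, ha0 i (Fin.castSucc_lt_castSucc_iff.mpr hij), (mem_bot R).mp (hw0 i hij),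
          sub_zero]
      · exact sub_eq_zero.mpr hwj.symm
    simpa using add_mem hrest hws

section Chain

variable {Φ : Type*} [AddCommGroup Φ] [LinearOrder Φ] {h : ℕ} {Ψ : Fin (h + 1) → AddSubgroup Φ}

/-- Coordinates of the lexicographic embedding: on `Ψ j`, `K j` is a Hölder embedding of
`Ψ j / Ψ (j + 1)` into `ℝ`. -/
structure IsAdaptedFamily (Ψ : Fin (h + 1) → AddSubgroup Φ) (K : Fin h → Φ →+ ℝ) : Prop where
  nonneg : ∀ j, ∀ x ∈ Ψ j.castSucc, 0 ≤ x → 0 ≤ K j x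
  eq_zero_iff : ∀ j, ∀ x ∈ Ψ j.castSucc, K j x = 0 ↔ x ∈ Ψ j.succ
  mem_span : ∀ j x, K j x ∈ Submodule.span ℚ (K j '' Ψ j.castSucc)

namespace IsAdaptedFamily

variable {K : Fin h → Φ →+ ℝ}

theorem mem_iff (hK : IsAdaptedFamily Ψ K) (htop : Ψ 0 = ⊤) (hanti : Antitone Ψ)
    (j : Fin (h + 1)) (x : Φ) : x ∈ Ψ j ↔ ∀ i : Fin h, (i : ℕ) < (j : ℕ) → K i x = 0 := by
  induction j using Fin.induction with
  | zero => simp [htop]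
  | succ j ih =>
    have hstep : x ∈ Ψ j.succ ↔ x ∈ Ψ j.castSucc ∧ K j x = 0 :=
      ⟨fun hx => have hx' := hanti (Fin.castSucc_le_succ j) hx
          ⟨hx', (hK.eq_zero_iff j x hx').mpr hx⟩,
        fun ⟨hx, hx0⟩ => (hK.eq_zero_iff j x hx).mp hx0⟩
    rw [hstep, ih]
    constructor
    · rintro ⟨hlt, hj⟩ i hi
      rcases Nat.lt_succ_iff_lt_or_eq.mp hi with hi | hi
      · exact hlt i hi
      · rwa [Fin.ext hi]
    · intro hle
      exact ⟨fun i hi => hle i (Nat.lt_succ_of_lt hi), hle j (Nat.lt_succ_self _)⟩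

theorem toLex_pos (hK : IsAdaptedFamily Ψ K) (htop : Ψ 0 = ⊤) (hbot : Ψ (Fin.last h) = ⊥)
    (hanti : Antitone Ψ) {x : Φ} (hx : 0 < x) : 0 < toLex fun i => K i x := by
  have hne : {i | K i x ≠ 0}.Nonempty := by
    by_contra hzero
    have : x ∈ Ψ (Fin.last h) := (hK.mem_iff htop hanti _ x).mpr fun i _ => by
      by_contra hi
      exact hzero ⟨i, hi⟩
    rw [hbot, AddSubgroup.mem_bot] at this
    exact hx.ne' this
  obtain ⟨j, hj, hmin⟩ := wellFounded_lt.has_min _ hne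
  have hbefore : ∀ i < j, K i x = 0 := fun i hi => not_not.mp fun hi' => hmin i hi' hi
  have hxj : x ∈ Ψ j.castSucc := (hK.mem_iff htop hanti _ x).mpr fun i hi => hbefore i hi
  exact ⟨j, fun i hi => (hbefore i hi).symm, (hK.nonneg j x hxj hx.le).lt_of_ne' hj⟩

theorem strictMono_toLex [IsOrderedAddMonoid Φ] (hK : IsAdaptedFamily Ψ K) (htop : Ψ 0 = ⊤)
    (hbot : Ψ (Fin.last h) = ⊥) (hanti : Antitone Ψ) :
    StrictMono fun x : Φ => toLex fun i => K i x :=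
  (strictMono_iff_map_pos ((toLexAddEquiv _).toAddMonoidHom.comp (AddMonoidHom.pi K))).mpr
    fun _ => hK.toLex_pos htop hbot hanti

theorem span_ne_bot (hK : IsAdaptedFamily Ψ K) (hanti : StrictAnti Ψ) (j : Fin h) :
    Submodule.span ℚ (K j '' Ψ j.castSucc) ≠ ⊥ := by
  obtain ⟨x, hx, hx'⟩ := SetLike.exists_of_lt (hanti (Fin.castSucc_lt_succ (i := j)))
  exact (Submodule.ne_bot_iff _).mpr
    ⟨K j x, Submodule.subset_span ⟨x, hx, rfl⟩, fun h0 => hx' ((hK.eq_zero_iff j x hx).mp h0)⟩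

theorem range_liftBaseChange (hK : IsAdaptedFamily Ψ K) (htop : Ψ 0 = ⊤) (hanti : Antitone Ψ) :
    LinearMap.range ((AddMonoidHom.pi K).toIntLinearMap.liftBaseChange ℚ) =
      Submodule.pi Set.univ fun j => Submodule.span ℚ (K j '' Ψ j.castSucc) := by
  have hsub : (LinearMap.range (AddMonoidHom.pi K).toIntLinearMap : Set (Fin h → ℝ)) ⊆
      Submodule.pi Set.univ fun j => Submodule.span ℚ (K j '' Ψ j.castSucc) := by
    rintro _ ⟨x, rfl⟩ i -
    exact hK.mem_span i x
  rw [LinearMap.range_liftBaseChange]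
  refine le_antisymm (Submodule.span_le.mpr hsub)
    (Submodule.pi_le_span_of_triangular hsub fun j => Submodule.span_mono ?_)
  rintro _ ⟨x, hx, rfl⟩
  exact ⟨fun i => K i x, ⟨⟨x, rfl⟩, fun i hi => (hK.mem_iff htop hanti _ x).mp hx i hi⟩, rfl⟩

end IsAdaptedFamily

variable [IsOrderedAddMonoid Φ]

theorem exists_monotone_ker_eq_addSubgroupOf (hconv : ∀ i, IsConvexAddSubgroup (Ψ i))
    (hanti : StrictAnti Ψ) (hmax : ∀ C : AddSubgroup Φ, IsConvexAddSubgroup C → ∃ i, C = Ψ i)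
    (j : Fin h) :
    ∃ f : Ψ j.castSucc →+ ℝ, Monotone f ∧ f.ker = (Ψ j.succ).addSubgroupOf (Ψ j.castSucc) := by
  set B := Ψ j.castSucc
  have hsucc : ((Ψ j.succ).addSubgroupOf B).map B.subtype = Ψ j.succ := by
    rw [AddSubgroup.addSubgroupOf_map_subtype, inf_eq_left]
    exact hanti.antitone (Fin.castSucc_le_succ j)
  have htop : (⊤ : AddSubgroup B).map B.subtype = B := by
    rw [← AddMonoidHom.range_eq_map, AddSubgroup.range_subtype]
  refine (hconv j.succ).comap (f := B.subtype) (fun _ _ hxy => hxy) |>.exists_monotone_ker_eq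
    fun C hC hNC => ?_
  obtain ⟨i, hi⟩ := hmax _ ((hconv _).map_subtype hC)
  have hlo : j.castSucc ≤ i := hanti.le_iff_ge.mp (hi ▸ AddSubgroup.map_subtype_le C)
  have hhi : i ≤ j.succ := hanti.le_iff_ge.mp (hsucc ▸ hi ▸ AddSubgroup.map_mono hNC)
  have hinj := AddSubgroup.map_injective B.subtype_injective
  obtain rfl | rfl : i = j.castSucc ∨ i = j.succ := by
    simp only [Fin.ext_iff, Fin.le_def, Fin.val_castSucc, Fin.val_succ] at hlo hhi ⊢
    omega
  · exact .inr (hinj (hi.trans htop.symm))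
  · exact .inl (hinj (hi.trans hsucc.symm))

theorem exists_isAdaptedFamily (hconv : ∀ i, IsConvexAddSubgroup (Ψ i)) (hanti : StrictAnti Ψ)
    (hmax : ∀ C : AddSubgroup Φ, IsConvexAddSubgroup C → ∃ i, C = Ψ i) :
    ∃ K, IsAdaptedFamily Ψ K := by
  choose f hf_mono hf_ker using exists_monotone_ker_eq_addSubgroupOf hconv hanti hmax
  choose K hK_ext hK_span using fun j => AddSubgroup.exists_extend_mem_span (f j)
  refine ⟨K, fun j x hx hx0 => ?_, fun j x hx => ?_, fun j x => ?_⟩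
  · rw [show x = (⟨x, hx⟩ : Ψ j.castSucc) from rfl, hK_ext, ← map_zero (f j)]
    exact hf_mono j hx0
  · rw [show x = (⟨x, hx⟩ : Ψ j.castSucc) from rfl, hK_ext, ← AddMonoidHom.mem_ker, hf_ker,
      AddSubgroup.mem_addSubgroupOf]
  · simpa only [show ⇑(f j) = K j ∘ (↑) from funext fun b => (hK_ext j b).symm, Set.range_comp,
      Subtype.range_coe_subtype, SetLike.setOfPred_mem_eq] using hK_span j x

end Chain

-- The rank-one factors `Ξ j` are realized as nonzero `ℚ`-subspaces of `ℝ`.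
/-- A totally ordered abelian group of finite rank `h`, with its maximal chain of
convex subgroups `(0) = Ψ_h ⊂ ⋯ ⊂ Ψ₀ = Φ`, has divisible hull order-isomorphic to a
lexicographic product of `h` rank-one totally ordered divisible groups (realized as
nontrivial `ℚ`-subspaces of `ℝ`), compatibly with the chain. -/
theorem divisible_hull_lex_product (Φ : Type*) [AddCommGroup Φ] [LinearOrder Φ] [IsOrderedAddMonoid Φ]
    (h : ℕ) (Ψ : Fin (h + 1) → AddSubgroup Φ)
    (hconv : ∀ i, IsConvexAddSubgroup (Ψ i))
    (htop : Ψ 0 = ⊤) (hbot : Ψ (Fin.last h) = ⊥)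
    (hanti : StrictAnti Ψ)
    (hmax : ∀ C : AddSubgroup Φ, IsConvexAddSubgroup C → ∃ i, C = Ψ i) :
    ∃ Ξ : Fin h → Submodule ℚ ℝ, (∀ j, Ξ j ≠ ⊥) ∧
      ∃ e : (ℚ ⊗[ℤ] Φ) ≃ₗ[ℚ] ↥(Submodule.pi Set.univ Ξ),
        (∀ x y : Φ, x ≤ y ↔
          toLex ((e (1 ⊗ₜ[ℤ] x) : Fin h → ℝ)) ≤ toLex ((e (1 ⊗ₜ[ℤ] y) : Fin h → ℝ))) ∧
        (∀ j : Fin (h + 1), ∀ x : Φ, x ∈ Ψ j ↔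
          ∀ i : Fin h, (i : ℕ) < (j : ℕ) → (e (1 ⊗ₜ[ℤ] x) : Fin h → ℝ) i = 0) := by
  obtain ⟨K, hK⟩ := exists_isAdaptedFamily hconv hanti hmax
  have hmono := hK.strictMono_toLex htop hbot hanti.antitone
  set E := (AddMonoidHom.pi K).toIntLinearMap.liftBaseChange ℚ
  have hinj : Function.Injective E :=
    AddMonoidHom.liftBaseChange_rat_injective fun x y hxy => hmono.injective (congrArg toLex hxy)
  let e := (LinearEquiv.ofInjective E hinj).trans
    (LinearEquiv.ofEq _ _ (hK.range_liftBaseChange htop hanti.antitone))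
  have he : ∀ x, (e (1 ⊗ₜ x) : Fin h → ℝ) = fun i => K i x :=
    (AddMonoidHom.pi K).toIntLinearMap.liftBaseChange_one_tmul ℚ
  refine ⟨_, hK.span_ne_bot hanti, e, fun x y => ?_, fun j x => ?_⟩
  · rw [he, he]
    exact hmono.le_iff_le.symm
  · rw [he]
    exact hK.mem_iff htop hanti.antitone j x
end

section
/- Let Φ be a totally ordered abelian group and let W be a well-ordered subset of the set Φ_{>0} of strictly positive elements. Then the subsemigroup of Φ generated by W (all finite sums of elements of W) is well-ordered for the induced order. -/
/-- B. H. Neumann's lemma: the subsemigroup generated by a well-ordered set of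
strictly positive elements of a totally ordered abelian group is well-ordered. -/
theorem neumann_wellOrdered_closure (Φ : Type*) [AddCommGroup Φ] [LinearOrder Φ]
    [IsOrderedAddMonoid Φ]
    (W : Set Φ) (hpos : ∀ x ∈ W, 0 < x) (hwo : W.IsWF) :
    (AddSubsemigroup.closure W : Set Φ).IsWF := by
  have hpwo : (AddSubmonoid.closure W : Set Φ).IsPWO :=
    hwo.isPWO.addSubmonoid_closure fun x hx => (hpos x hx).le
  have hsub : AddSubsemigroup.closure W ≤ (AddSubmonoid.closure W).toAddSubsemigroup :=
    AddSubsemigroup.closure_le.2 AddSubmonoid.subset_closure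
  exact (hpwo.mono hsub).isWF
end

section
/- Let Γ be a well-ordered additive submonoid of the nonnegative part of a totally ordered abelian group Φ. Then Γ is combinatorially finite: for every γ ∈ Γ, the number of finite sequences (γ₁, …, γ_n) of strictly positive elements of Γ with γ₁ + ⋯ + γ_n = γ is finite. -/
/-!
Induct on `γ` along the well-order of `Γ`. A nonempty representation of `γ` splits as a head `a > 0`
and a tail representing `b`, where `a + b = γ` with `a, b ∈ Γ`. Since `Γ` is well-ordered there are
only finitely many such pairs `(a, b)`, and `b < γ`, so each tail ranges over a finite set by induction.
-/

namespace AddSubmonoid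

variable {α : Type*} [AddCommMonoid α] [PartialOrder α]

def sumReps (Γ : AddSubmonoid α) (a : α) : Set (List α) :=
  {l | (∀ x ∈ l, x ∈ Γ ∧ 0 < x) ∧ l.sum = a}

theorem sumReps_subset (Γ : AddSubmonoid α) (a : α) :
    Γ.sumReps a ⊆ insert [] (⋃ p ∈ {p ∈ (Γ : Set α).antidiagonal Γ a | 0 < p.1},
      List.cons p.1 '' Γ.sumReps p.2) := by
  rintro (_ | ⟨x, t⟩) ⟨hl, hsum⟩
  · exact Set.mem_insert _ _
  · have htail : ∀ y ∈ t, y ∈ Γ ∧ 0 < y := fun y hy => hl y (List.mem_cons_of_mem x hy)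
    have hx := hl x List.mem_cons_self
    have htΓ : t.sum ∈ Γ := Γ.list_sum_mem fun y hy => (htail y hy).1
    refine Or.inr (Set.mem_biUnion (x := (x, t.sum)) ⟨⟨hx.1, htΓ, ?_⟩, hx.2⟩ ⟨t, ⟨htail, rfl⟩, rfl⟩)
    simpa using hsum

theorem sumReps_finite [IsOrderedCancelAddMonoid α] {Γ : AddSubmonoid α} (hΓ : (Γ : Set α).IsPWO)
    {a : α} (ha : a ∈ Γ) :
    (Γ.sumReps a).Finite := by
  refine hΓ.isWF.induction ha (P := fun a => (Γ.sumReps a).Finite) fun a _ ih => ?_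
  refine ((Set.Finite.biUnion ?_ ?_).insert []).subset (Γ.sumReps_subset a)
  · exact (Set.AddAntidiagonal.finite_of_isPWO hΓ hΓ a).subset fun _ hp => hp.1
  · rintro ⟨x, b⟩ ⟨⟨-, hb, rfl⟩, hx⟩
    exact (ih b hb (lt_add_of_pos_left b hx)).image _

end AddSubmonoid

theorem combinatorially_finite_general (Φ : Type*) [AddCommGroup Φ] [LinearOrder Φ] [IsOrderedAddMonoid Φ]
    (Γ : AddSubmonoid Φ) (hwo : (Γ : Set Φ).IsWF)
    (γ : Φ) (hγ : γ ∈ Γ) :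
    {l : List Φ | (∀ x ∈ l, x ∈ Γ ∧ 0 < x) ∧ l.sum = γ}.Finite :=
  AddSubmonoid.sumReps_finite hwo.isPWO hγ

/-- Campillo–Galindo: a well-ordered submonoid `Γ` of the nonnegative part of a
totally ordered abelian group is combinatorially finite: every `γ ∈ Γ` has only
finitely many representations as a sum of a finite sequence of strictly positive
elements of `Γ`. -/
theorem combinatorially_finite (Φ : Type*) [AddCommGroup Φ] [LinearOrder Φ] [IsOrderedAddMonoid Φ]
    (Γ : AddSubmonoid Φ) (hpos : ∀ x ∈ Γ, 0 ≤ x) (hwo : (Γ : Set Φ).IsWF)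
    (γ : Φ) (hγ : γ ∈ Γ) :
    {l : List Φ | (∀ x ∈ l, x ∈ Γ ∧ 0 < x) ∧ l.sum = γ}.Finite :=
  combinatorially_finite_general Φ Γ hwo γ hγ
end
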